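/- Let λ > 0, r ≠ λ, let d ∈ ℝ satisfy d² = r²(r−λ)² + 4, let V ∈ ℝ satisfy V² = (r/2)(−r + d/(r−λ)), and let ε = ±1. At the point ξ_ε(r,λ) the first integrals take the values L = −ε·½[λ(r−λ)+d]·V, H = −½r(r−λ) + (2r−λ)d/(2(r−λ)), and K = (λ/(4(r−λ)²))·[r(r−λ)−d]·[r(r−λ)(4r−3λ) − λd]. -/

import Mathlib

/-- The energy integral H. -/
noncomputable def KYH (v : Fin 6 → ℝ) : ℝ :=
  (v 0)^2 + (v 1)^2 + (1/2)*(v 2)^2 - v 3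

/-- The area integral L. -/
noncomputable def KYL (lam : ℝ) (v : Fin 6 → ℝ) : ℝ :=
  v 0 * v 3 + v 1 * v 4 + (1/2)*(v 2 + lam)*(v 5)

/-- The Kowalevski–Yehia integral K. -/
noncomputable def KYK (lam : ℝ) (v : Fin 6 → ℝ) : ℝ :=
  ((v 0)^2 - (v 1)^2 + v 3)^2 + (2*(v 0)*(v 1) + v 4)^2
    + 2*lam*((v 2 - lam)*((v 0)^2 + (v 1)^2) + 2*(v 0)*(v 5))

/-!
On `ξ_ε` the integrals are polynomials in `ε` and `V`; since `ε² = 1` only `V²` survives in `H`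
and `K`, and the relation for `V²` collapses `ω₁² + α₁` to `-λ (r(r-λ) - d) / (2(r-λ))`,
which is where the factorisation of `K` comes from.
-/

/-- The point `ξ_ε(r,λ)` in the coordinates `(ω₁, ω₂, ω₃, α₁, α₂, α₃)`. -/
noncomputable def relEquilibrium (lam r d V ε : ℝ) : Fin 6 → ℝ :=
  ![ε*V, 0, r, (1/2)*(r*(r - lam) - d), 0, -ε*(r - lam)*V]

section RelEquilibrium

variable (lam r d V ε : ℝ)

theorem KYL_relEquilibrium :
    KYL lam (relEquilibrium lam r d V ε) = -ε * ((1/2)*(lam*(r - lam) + d)) * V := by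
  simp only [KYL, relEquilibrium, Matrix.cons_val_zero, Matrix.cons_val_one, Matrix.cons_val]
  ring

variable {ε}

theorem KYH_relEquilibrium (hε : ε^2 = 1) :
    KYH (relEquilibrium lam r d V ε) = V^2 + (1/2)*r^2 - (1/2)*(r*(r - lam) - d) := by
  simp only [KYH, relEquilibrium, Matrix.cons_val_zero, Matrix.cons_val_one, Matrix.cons_val]
  linear_combination V^2 * hε

theorem KYK_relEquilibrium (hε : ε^2 = 1) :
    KYK lam (relEquilibrium lam r d V ε)
      = (V^2 + (1/2)*(r*(r - lam) - d))^2 - 2*lam*(r - lam)*V^2 := by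
  simp only [KYK, relEquilibrium, Matrix.cons_val_zero, Matrix.cons_val_one, Matrix.cons_val]
  linear_combination V^2 * ((ε^2 + 1)*V^2 + (r*(r - lam) - d) - 2*lam*(r - lam)) * hε

end RelEquilibrium

theorem first_integral_values_at_relative_equilibria_general
    (lam r d V ε : ℝ)
    (hr : r ≠ lam)
    (hV : V^2 = (r/2)*(-r + d/(r - lam)))
    (hε : ε = 1 ∨ ε = -1)
    (ξ : Fin 6 → ℝ)
    (hξ : ξ = ![ε*V, 0, r, (1/2)*(r*(r - lam) - d), 0, -ε*(r - lam)*V]) :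
    KYL lam ξ = -ε * ((1/2)*(lam*(r - lam) + d)) * V ∧
    KYH ξ = -(1/2)*r*(r - lam) + (2*r - lam)*d/(2*(r - lam)) ∧
    KYK lam ξ = (lam/(4*(r - lam)^2)) * (r*(r - lam) - d)
        * (r*(r - lam)*(4*r - 3*lam) - lam*d) := by
  have hε2 : ε^2 = 1 := sq_eq_one_iff.mpr hε
  have hrl : r - lam ≠ 0 := sub_ne_zero.mpr hr
  have hω₁α₁ : V^2 + (1/2)*(r*(r - lam) - d) = -lam*(r*(r - lam) - d)/(2*(r - lam)) := by
    rw [hV]; field_simp; ring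
  change ξ = relEquilibrium lam r d V ε at hξ
  subst hξ
  refine ⟨KYL_relEquilibrium lam r d V ε, ?_, ?_⟩
  · rw [KYH_relEquilibrium lam r d V hε2, hV]
    field_simp
    ring
  · rw [KYK_relEquilibrium lam r d V hε2, hω₁α₁, hV]
    field_simp
    ring

/-- values of the first integrals L, H, K at the relative
equilibrium ξ_ε(r,λ). -/
theorem first_integral_values_at_relative_equilibria
    (lam r d V ε : ℝ)
    (hlam : 0 < lam) (hr : r ≠ lam)
    (hd : d^2 = r^2*(r - lam)^2 + 4)
    (hV : V^2 = (r/2)*(-r + d/(r - lam)))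
    (hε : ε = 1 ∨ ε = -1)
    (ξ : Fin 6 → ℝ)
    (hξ : ξ = ![ε*V, 0, r, (1/2)*(r*(r - lam) - d), 0, -ε*(r - lam)*V]) :
    KYL lam ξ = -ε * ((1/2)*(lam*(r - lam) + d)) * V ∧
    KYH ξ = -(1/2)*r*(r - lam) + (2*r - lam)*d/(2*(r - lam)) ∧
    KYK lam ξ = (lam/(4*(r - lam)^2)) * (r*(r - lam) - d)
        * (r*(r - lam)*(4*r - 3*lam) - lam*d) :=
  first_integral_values_at_relative_equilibria_general lam r d V ε hr hV hε ξ hξ
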